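/- The vertices of the cycle polytope P(G) of a directed multigraph G are exactly the vectors e_C for C a simple cycle of G; in particular, distinct simple cycles give distinct vertices. -/

import Mathlib

open Filter Finset

variable {V E : Type*}

/-- A (non-empty) closed directed walk in the directed multigraph with edge-source map `src`
and edge-target map `tgt`: a nonempty list of edges in which the target of each edge is the
source of the next, and the target of the last edge is the source of the first. -/
def IsCycleWalk (src tgt : E → V) (c : List E) : Prop :=
  c ≠ [] ∧ c.Chain' (fun a b => tgt a = src b) ∧ c.getLast?.map tgt = c.head?.map src

/-- A simple cycle: a closed directed walk that does not repeat vertices. -/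
def IsSimpleCycle (src tgt : E → V) (c : List E) : Prop :=
  IsCycleWalk src tgt c ∧ (c.map src).Nodup

/-- The normalized incidence vector `e_C` of a cycle `C`:
its coordinate at an edge `e` is (number of occurrences of `e` in `C`)/|C|. -/
noncomputable def cycleVec [DecidableEq E] (c : List E) : E → ℝ :=
  fun e => (c.count e : ℝ) / (c.length : ℝ)

/-- The cycle polytope of a directed multigraph: the convex hull of the normalized incidence
vectors of its simple cycles. -/
noncomputable def cyclePolytope [DecidableEq E] (src tgt : E → V) : Set (E → ℝ) :=
  convexHull ℝ { x | ∃ c, IsSimpleCycle src tgt c ∧ x = cycleVec c }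

/-!
All vectors `e_C` are nonnegative, so `P(G)` lies in the nonnegative orthant, and the nonnegative
vectors supported on the edges of a simple cycle `C` form a face of the orthant. A simple cycle
using only edges of `C` is a rotation of `C`, since every vertex of `C` is the source of exactly
one edge of `C`; hence this face meets the generators of `P(G)` only in `e_C`, and `e_C` is a
vertex. Conversely every vertex of a convex hull is a generator, and `e_C = e_D` forces `C` and
`D` to have the same edges, hence to be rotations of each other.
-/

open Function

section Convexity
variable {𝕜 M : Type*} [Field 𝕜] [LinearOrder 𝕜] [IsStrictOrderedRing 𝕜] [AddCommGroup M]
  [Module 𝕜 M] {K F A : Set M} {v : M}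

theorem IsExtreme.convexHull_inter_subset_singleton (hK : Convex 𝕜 K) (hF : IsExtreme 𝕜 K F)
    (hA : A ⊆ K) (hAF : A ∩ F ⊆ {v}) : convexHull 𝕜 A ∩ F ⊆ {v} := by
  -- The points of `K` that lie in `F` only at `v` form a convex set, because `F` is a face of `K`.
  have hC : Convex 𝕜 {y ∈ K | y ∈ F → y = v} := by
    refine convex_iff_segment_subset.mpr fun x hx y hy z hz => ⟨hK.segment_subset hx.1 hy.1 hz, ?_⟩
    intro hzF
    rw [← insert_endpoints_openSegment] at hz
    rcases hz with rfl | rfl | hz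
    · exact hx.2 hzF
    · exact hy.2 hzF
    · have hxv := hx.2 (hF.left_mem_of_mem_openSegment hx.1 hy.1 hzF hz)
      have hyv := hy.2 (hF.right_mem_of_mem_openSegment hx.1 hy.1 hzF hz)
      rwa [hxv, hyv, openSegment_same] at hz
  have hAC : A ⊆ {y ∈ K | y ∈ F → y = v} := fun a ha => ⟨hA ha, fun haF => hAF ⟨ha, haF⟩⟩
  rintro z ⟨hz, hzF⟩
  exact (convexHull_min hAC hC hz).2 hzF

theorem IsExtreme.mem_extremePoints_convexHull (hK : Convex 𝕜 K) (hF : IsExtreme 𝕜 K F)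
    (hA : A ⊆ K) (hAF : A ∩ F = {v}) : v ∈ (convexHull 𝕜 A).extremePoints 𝕜 := by
  have hv : v ∈ A ∩ F := hAF ▸ rfl
  have hface := hF.convexHull_inter_subset_singleton hK hA hAF.subset
  have hhull := convexHull_min hA hK
  exact ⟨subset_convexHull 𝕜 A hv.1, fun x₁ hx₁ x₂ hx₂ hv₁₂ =>
    hface ⟨hx₁, hF.left_mem_of_mem_openSegment (hhull hx₁) (hhull hx₂) hv.2 hv₁₂⟩⟩

theorem isExtreme_Ici_zero_support_subset {ι : Type*} (s : Set ι) :
    IsExtreme 𝕜 (Set.Ici (0 : ι → 𝕜)) {y | 0 ≤ y ∧ support y ⊆ s} := by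
  refine ⟨fun y hy => hy.1, fun x₁ hx₁ x₂ hx₂ x hx ⟨a, b, ha, hb, _, hab⟩ => ⟨hx₁, ?_⟩⟩
  refine support_subset_iff'.mpr fun i hi => ?_
  have hxi : a * x₁ i + b * x₂ i = 0 := by
    rw [← support_subset_iff'.mp hx.2 i hi, ← hab]
    rfl
  have hterms :=
    (add_eq_zero_iff_of_nonneg (mul_nonneg ha.le (hx₁ i)) (mul_nonneg hb.le (hx₂ i))).mp hxi
  exact (mul_eq_zero.mp hterms.1).resolve_left ha.ne'

end Convexity

namespace IsCycleWalk
variable {src tgt : E → V} {l : List E}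

theorem length_pos (h : IsCycleWalk src tgt l) : 0 < l.length := List.length_pos_iff.mpr h.1

theorem tgt_getElem (h : IsCycleWalk src tgt l) (i : ℕ) (hi : i < l.length) :
    tgt l[i] = src (l[(i + 1) % l.length]'(Nat.mod_lt _ h.length_pos)) := by
  have hpos := h.length_pos
  obtain ⟨-, hchain, hwrap⟩ := h
  rcases Nat.lt_or_ge (i + 1) l.length with hlt | hge
  · simp only [Nat.mod_eq_of_lt hlt]
    exact List.isChain_iff_getElem.mp hchain i hlt
  · obtain rfl : i = l.length - 1 := by omega
    simp only [Nat.sub_add_cancel hpos, Nat.mod_self]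
    simpa [List.getLast?_eq_getElem?, List.head?_eq_getElem?, hpos] using hwrap

end IsCycleWalk

namespace IsSimpleCycle
variable {src tgt : E → V} {l₁ l₂ : List E}

theorem nodup (h : IsSimpleCycle src tgt l₁) : l₁.Nodup := h.2.of_map src

theorem eq_getElem_of_src_eq (h : IsSimpleCycle src tgt l₁) {e : E} (he : e ∈ l₁) {j : ℕ}
    (hj : j < l₁.length) (hsrc : src e = src l₁[j]) : e = l₁[j] := by
  obtain ⟨i, hi, rfl⟩ := List.getElem_of_mem he
  have hsrc' : (l₁.map src)[i]'(by simpa using hi) = (l₁.map src)[j]'(by simpa using hj) := by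
    simpa using hsrc
  obtain rfl : i = j := h.2.getElem_inj_iff.mp hsrc'
  rfl

theorem getElem_mod_eq_of_subset (h₁ : IsSimpleCycle src tgt l₁) (h₂ : IsCycleWalk src tgt l₂)
    (hsub : l₂ ⊆ l₁) {r : ℕ} (hr : r < l₁.length) (h0 : l₂[0]'h₂.length_pos = l₁[r]) (i : ℕ) :
    l₂[i % l₂.length]'(Nat.mod_lt _ h₂.length_pos) =
      l₁[(r + i) % l₁.length]'(Nat.mod_lt _ h₁.1.length_pos) := by
  induction i with
  | zero => simpa [Nat.mod_eq_of_lt hr] using h0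
  | succ i ih =>
    refine h₁.eq_getElem_of_src_eq (hsub (List.getElem_mem _)) _ ?_
    have hstep := h₂.tgt_getElem (i % l₂.length) (Nat.mod_lt _ h₂.length_pos)
    rw [ih, h₁.1.tgt_getElem] at hstep
    simpa [Nat.mod_add_mod, add_assoc] using hstep.symm

theorem exists_rotate_eq_of_subset (h₁ : IsSimpleCycle src tgt l₁)
    (h₂ : IsSimpleCycle src tgt l₂) (hsub : l₂ ⊆ l₁) : ∃ r, l₂ = l₁.rotate r := by
  obtain ⟨r, hr, h0⟩ := List.getElem_of_mem (hsub (List.getElem_mem h₂.1.length_pos))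
  have key := h₁.getElem_mod_eq_of_subset h₂.1 hsub hr h0.symm
  -- Both lengths are periods of the common edge sequence, so each divides the other.
  have h₁₂ : l₁.length ∣ l₂.length := by
    have h := key l₂.length
    simp only [Nat.mod_self] at h
    have hr' : r = (r + l₂.length) % l₁.length := (h₁.nodup.getElem_inj_iff).mp (h0.trans h)
    have hmod : r + l₂.length ≡ r + 0 [MOD l₁.length] := by
      rw [Nat.ModEq, add_zero, Nat.mod_eq_of_lt hr, ← hr']
    exact (Nat.modEq_zero_iff_dvd).mp (Nat.ModEq.add_left_cancel' r hmod)
  have h₂₁ : l₂.length ∣ l₁.length := by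
    have h := key l₁.length
    simp only [Nat.add_mod_right, Nat.mod_eq_of_lt hr] at h
    exact Nat.dvd_of_mod_eq_zero ((h₂.nodup.getElem_inj_iff).mp (h.trans h0))
  refine ⟨r, List.ext_getElem (by simp [Nat.dvd_antisymm h₂₁ h₁₂]) fun i hi₂ hi => ?_⟩
  rw [List.getElem_rotate]
  simpa [Nat.mod_eq_of_lt hi₂, add_comm] using key i

end IsSimpleCycle

section CycleVec
variable [DecidableEq E]

theorem cycleVec_nonneg (l : List E) : 0 ≤ cycleVec l := fun _ => by
  unfold cycleVec
  positivity

theorem support_cycleVec {l : List E} (hl : l ≠ []) :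
    support (cycleVec l) = {e | e ∈ l} := by
  ext e
  simp [cycleVec, hl, List.count_eq_zero]

theorem cycleVec_rotate (l : List E) (r : ℕ) : cycleVec (l.rotate r) = cycleVec l := by
  funext e
  simp only [cycleVec, (List.rotate_perm l r).count_eq, List.length_rotate]

variable {src tgt : E → V} {l c : List E}

theorem IsSimpleCycle.cycleVec_eq_of_support_subset (hl : IsSimpleCycle src tgt l)
    (hc : IsSimpleCycle src tgt c)
    (hsupp : support (cycleVec c) ⊆ support (cycleVec l)) :
    cycleVec c = cycleVec l := by
  rw [support_cycleVec hc.1.1, support_cycleVec hl.1.1] at hsupp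
  obtain ⟨r, rfl⟩ := hl.exists_rotate_eq_of_subset hc hsupp
  exact cycleVec_rotate l r

theorem IsSimpleCycle.cycleVec_mem_extremePoints (hl : IsSimpleCycle src tgt l) :
    cycleVec l ∈ (cyclePolytope src tgt).extremePoints ℝ := by
  refine (isExtreme_Ici_zero_support_subset (support (cycleVec l))).mem_extremePoints_convexHull
    (convex_Ici 0) ?_ ?_
  · rintro _ ⟨c, -, rfl⟩
    exact cycleVec_nonneg c
  · refine Set.eq_singleton_iff_unique_mem.mpr ⟨⟨⟨l, hl, rfl⟩, cycleVec_nonneg l, subset_rfl⟩, ?_⟩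
    rintro _ ⟨⟨c, hc, rfl⟩, -, hsupp⟩
    exact hl.cycleVec_eq_of_support_subset hc hsupp

end CycleVec

/-- The vertices (extreme points) of the cycle polytope are exactly the normalized incidence
vectors `e_C` of simple cycles `C`; moreover distinct simple cycles (i.e. cycles that are not
rotations of each other) give distinct vertices. -/
theorem cyclePolytope_extremePoints [DecidableEq E] (src tgt : E → V) :
    (∀ x : E → ℝ,
        x ∈ Set.extremePoints ℝ (cyclePolytope src tgt) ↔
          ∃ c, IsSimpleCycle src tgt c ∧ x = cycleVec c) ∧
    ∀ c₁ c₂ : List E, IsSimpleCycle src tgt c₁ → IsSimpleCycle src tgt c₂ →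
      cycleVec c₁ = cycleVec c₂ → ∃ r : ℕ, c₂ = c₁.rotate r := by
  refine ⟨fun x => ⟨fun hx => ?_, ?_⟩, ?_⟩
  · exact extremePoints_convexHull_subset
      (A := {y | ∃ c, IsSimpleCycle src tgt c ∧ y = cycleVec c}) hx
  · rintro ⟨c, hc, rfl⟩
    exact hc.cycleVec_mem_extremePoints
  · intro c₁ c₂ h₁ h₂ hvec
    have hsupp := congrArg support hvec
    rw [support_cycleVec h₁.1.1, support_cycleVec h₂.1.1] at hsupp
    exact h₁.exists_rotate_eq_of_subset h₂ hsupp.ge
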